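/- In the topological setting, assume additionally that h is twice differentiable at 0 with h''(0) < 0. Then μ(N_{γ_max}) = 1 for every T-invariant Borel probability measure μ on Θ. -/

import Mathlib

/-!
Suppose `φ_t > 0` on a set `A` of positive `μ`-measure, `t = γ_max`. Since `f_t(θ, 0) = 0` and
`f_t(θ, x) > 0` for `x > 0`, the set `A` is `T`-invariant, so `ν = μ[|A]` is an invariant
probability measure with `φ_t > 0` `ν`-a.e. There
`log φ_t ∘ T - log φ_t = log g - t + H(φ_t)` with `H(x) = log (h(x) / x) < 0` by strict concavity,
and `H(φ_t)` is bounded because the secant slope `h(x) / x` decreases and `φ_t ≤ M_t`.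
A measurable real function whose coboundary is dominated by an integrable function `F` forces
`∫ F ≥ 0`; hence `0 ≤ γ(ν) - t + ∫ H(φ_t) dν < γ(ν) - t ≤ 0`.
-/

open MeasureTheory Filter Topology

/-- The general setting of the paper: a measurable base system with invertible
driving map `T`, a concave fibre function `h` (with its derivative `h'` on `[0,∞)`)
and a bounded measurable positive function `g`. -/
structure Setting (Θ : Type*) [MeasurableSpace Θ] where
  T : Θ → Θ
  Tinv : Θ → Θ
  left_inv : Function.LeftInverse Tinv T
  right_inv : Function.RightInverse Tinv T
  T_meas : Measurable T
  Tinv_meas : Measurable Tinv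
  h : ℝ → ℝ
  h' : ℝ → ℝ
  h_hasDeriv : ∀ x ∈ Set.Ici (0 : ℝ), HasDerivWithinAt h (h' x) (Set.Ici 0) x
  h'_cont : ContinuousOn h' (Set.Ici 0)
  h_strictConcave : StrictConcaveOn ℝ (Set.Ici 0) h
  h_zero : h 0 = 0
  h'_pos : ∀ x : ℝ, 0 < x → 0 < h' x
  h'_zero : h' 0 = 1
  h_sublinear : Tendsto (fun x => h x / x) atTop (𝓝 0)
  g : Θ → ℝ
  g_pos : ∀ θ, 0 < g θ
  g_bdd : ∃ C : ℝ, ∀ θ, g θ ≤ C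
  g_meas : Measurable g

namespace Setting

variable {Θ : Type*} [MeasurableSpace Θ]

/-- The fibre maps `f_t(θ,x) = e^{-t} g(θ) h(x)`. -/
noncomputable def f (S : Setting Θ) (t : ℝ) (θ : Θ) (x : ℝ) : ℝ :=
  Real.exp (-t) * S.g θ * S.h x

/-- The iterated fibre maps: `fn t 0 θ x = x` and
`fn t (n+1) θ x = f t (T^[n] θ) (fn t n θ x)`, so that `fn t 1 = f t`. -/
noncomputable def fn (S : Setting Θ) (t : ℝ) : ℕ → Θ → ℝ → ℝ
  | 0, _, x => x
  | n + 1, θ, x => S.f t (S.T^[n] θ) (S.fn t n θ x)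

/-- `ψ_{t,n}(θ) = f_t^n(T^{-n}θ, M)`. -/
noncomputable def ψ (S : Setting Θ) (t M : ℝ) (n : ℕ) (θ : Θ) : ℝ :=
  S.fn t n (S.Tinv^[n] θ) M

/-- The maximal invariant function `φ_t(θ) = inf_{n ≥ 1} ψ_{t,n}(θ)`. -/
noncomputable def φ (S : Setting Θ) (t M : ℝ) (θ : Θ) : ℝ :=
  ⨅ n : ℕ, S.ψ t M (n + 1) θ

/-- The zero set `N_t = {θ : φ_t(θ) = 0}`. -/
noncomputable def Nset (S : Setting Θ) (t M : ℝ) : Set Θ := {θ | S.φ t M θ = 0}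

/-- The critical parameter `t_c(θ) = inf {t : φ_t(θ) = 0}`. -/
noncomputable def tc (S : Setting Θ) (M : ℝ → ℝ) (θ : Θ) : ℝ :=
  sInf {t : ℝ | S.φ t (M t) θ = 0}

/-- The bifurcation set `S_t = {θ : t_c(θ) = t}`. -/
noncomputable def Sset (S : Setting Θ) (M : ℝ → ℝ) (t : ℝ) : Set Θ :=
  {θ | S.tc M θ = t}

/-- The Birkhoff average `Γ^{(n)}(θ) = (1/n) ∑_{k=1}^n log g(T^{-k}θ)`. -/
noncomputable def Γn (S : Setting Θ) (n : ℕ) (θ : Θ) : ℝ :=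
  (∑ k ∈ Finset.range n, Real.log (S.g (S.Tinv^[k + 1] θ))) / n

/-- The lower backwards Lyapunov average `Γ(θ) = liminf_n Γ^{(n)}(θ)`. -/
noncomputable def Γ (S : Setting Θ) (θ : Θ) : ℝ :=
  Filter.liminf (fun n : ℕ => S.Γn n θ) Filter.atTop

/-- The averaged exponent `γ(μ) = ∫ log g dμ`. -/
noncomputable def γfn (S : Setting Θ) (μ : Measure Θ) : ℝ :=
  ∫ θ, Real.log (S.g θ) ∂μ

/-- The function `H(x) = log (h(x)/x)`. -/
noncomputable def Hfn (S : Setting Θ) (x : ℝ) : ℝ := Real.log (S.h x / x)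

end Setting

/-- The set of averaged exponents `γ(μ)` of `T`-invariant Borel probability measures. -/
def Setting.γSet {Θ : Type*} [MeasurableSpace Θ] (S : Setting Θ) : Set ℝ :=
  {x : ℝ | ∃ μ : MeasureTheory.Measure Θ, MeasureTheory.IsProbabilityMeasure μ ∧
    MeasureTheory.MeasurePreserving S.T μ μ ∧ x = S.γfn μ}

/-- `γ_min`. -/
noncomputable def Setting.γmin {Θ : Type*} [MeasurableSpace Θ] (S : Setting Θ) : ℝ :=
  sInf S.γSet

/-- `γ_max`. -/
noncomputable def Setting.γmax {Θ : Type*} [MeasurableSpace Θ] (S : Setting Θ) : ℝ :=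
  sSup S.γSet

theorem MeasureTheory.MeasurePreserving.integral_nonneg_of_le_add_comp
    {α : Type*} [MeasurableSpace α] {μ : Measure α} [IsFiniteMeasure μ] {T : α → α}
    (hT : MeasurePreserving T μ μ) {v F : α → ℝ} (hv : Measurable v) (hF : Integrable F μ)
    (hvF : ∀ᵐ x ∂μ, v (T x) ≤ v x + F x) : 0 ≤ ∫ x, F x ∂μ := by
  -- Clipped to `[-K, K]`, `v` becomes integrable, so its coboundary has integral zero.
  let clip (K : ℕ) (y : ℝ) : ℝ := max (-K) (min y K)
  have clip_mono (K : ℕ) : Monotone (clip K) :=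
    fun a b hab => max_le_max le_rfl (min_le_min_right _ hab)
  have clip_lipschitz (K : ℕ) : LipschitzWith 1 (clip K) :=
    (LipschitzWith.id.min_const _).const_max _
  have clip_eq (K : ℕ) {y : ℝ} (hy : |y| ≤ K) : clip K y = y := by
    simp only [clip]; rw [min_eq_left (abs_le.1 hy).2, max_eq_right (abs_le.1 hy).1]
  have hclip_meas (K : ℕ) : AEStronglyMeasurable (fun x => clip K (v x)) μ :=
    (clip_lipschitz K).continuous.comp_aestronglyMeasurable hv.aestronglyMeasurable
  let G (K : ℕ) (x : α) : ℝ := clip K (v x + F x) - clip K (v x)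
  have hG_meas (K : ℕ) : AEStronglyMeasurable (G K) μ :=
    ((clip_lipschitz K).continuous.comp_aestronglyMeasurable
      (hv.aestronglyMeasurable.add hF.1)).sub (hclip_meas K)
  have hG_le (K : ℕ) (x : α) : ‖G K x‖ ≤ ‖F x‖ := by
    simpa [G, Real.dist_eq] using (clip_lipschitz K).dist_le_mul (v x + F x) (v x)
  have hG_int (K : ℕ) : Integrable (G K) μ :=
    hF.norm.mono' (hG_meas K) (ae_of_all _ (hG_le K))
  have hG_tendsto (x : α) : Tendsto (fun K => G K x) atTop (𝓝 (F x)) := by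
    refine tendsto_const_nhds.congr' ?_
    filter_upwards [eventually_ge_atTop ⌈|v x| + |F x|⌉₊] with K hK
    have hK : |v x| + |F x| ≤ K := (Nat.le_ceil _).trans (by exact_mod_cast hK)
    have hvF : |v x + F x| ≤ K := (abs_add_le _ _).trans hK
    simp only [G, clip_eq K hvF, clip_eq K (by linarith [abs_nonneg (F x)] : |v x| ≤ K)]
    ring
  have hG_nonneg (K : ℕ) : 0 ≤ ∫ x, G K x ∂μ := by
    have hw_int : Integrable (fun x => clip K (v x)) μ :=
      (integrable_const (K : ℝ)).mono' (hclip_meas K) (ae_of_all _ fun x =>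
        abs_le.2 ⟨le_max_left _ _, max_le (by simp) (min_le_right _ _)⟩)
    have hw_comp : ∫ x, clip K (v (T x)) ∂μ = ∫ x, clip K (v x) ∂μ := by
      have := integral_map hT.aemeasurable (hT.map_eq.symm ▸ hclip_meas K)
      rwa [hT.map_eq, eq_comm] at this
    have hwT_int : Integrable (fun x => clip K (v (T x))) μ :=
      hT.integrable_comp_of_integrable hw_int
    calc (0 : ℝ) = ∫ x, (clip K (v (T x)) - clip K (v x)) ∂μ := by
          rw [integral_sub hwT_int hw_int, hw_comp, sub_self]
      _ ≤ ∫ x, G K x ∂μ := integral_mono_ae (hwT_int.sub hw_int) (hG_int K)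
          (hvF.mono fun x hx => sub_le_sub_right (clip_mono K hx) _)
  exact ge_of_tendsto' (tendsto_integral_of_dominated_convergence _ hG_meas hF.norm
    (fun K => ae_of_all _ (hG_le K)) (ae_of_all _ hG_tendsto)) hG_nonneg

theorem MeasureTheory.integral_neg_of_ae_neg {α : Type*} [MeasurableSpace α] {μ : Measure α}
    [NeZero μ] {f : α → ℝ} (hf : Integrable f μ) (h : ∀ᵐ x ∂μ, f x < 0) : ∫ x, f x ∂μ < 0 := by
  have hsupp : μ (Function.support fun x => -f x) ≠ 0 :=
    frequently_ae_mem_iff.1 (h.mono fun x hx => neg_ne_zero.2 hx.ne).frequently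
  have := (integral_pos_iff_support_of_nonneg_ae (h.mono fun x hx => (neg_pos.2 hx).le)
    hf.neg).2 (pos_iff_ne_zero.2 hsupp)
  rwa [integral_neg, neg_pos] at this

open ProbabilityTheory in
theorem MeasureTheory.MeasurePreserving.cond {α : Type*} [MeasurableSpace α] {μ : Measure α}
    {T : α → α} (hT : MeasurePreserving T μ μ) {s : Set α} (hs : MeasurableSet s)
    (hTs : T ⁻¹' s = s) : MeasurePreserving T μ[|s] μ[|s] := by
  have := (hT.restrict_preimage hs).smul_measure (μ s)⁻¹
  rwa [hTs] at this

namespace Setting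

variable {Θ : Type*} [MeasurableSpace Θ] (S : Setting Θ)

lemma h_continuousOn : ContinuousOn S.h (Set.Ici 0) :=
  fun x hx => (S.h_hasDeriv x hx).continuousWithinAt

lemma h_strictMonoOn : StrictMonoOn S.h (Set.Ici 0) := by
  refine strictMonoOn_of_hasDerivWithinAt_pos (convex_Ici 0) S.h_continuousOn
    (fun x hx => ?_) (fun x hx => S.h'_pos x (by simpa using hx))
  rw [interior_Ici] at hx ⊢
  exact (S.h_hasDeriv x (Set.mem_Ici.2 (le_of_lt hx))).mono Set.Ioi_subset_Ici_self

lemma h_pos {x : ℝ} (hx : 0 < x) : 0 < S.h x := by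
  simpa [S.h_zero] using S.h_strictMonoOn Set.self_mem_Ici (Set.mem_Ici.2 hx.le) hx

lemma h_lt_self {x : ℝ} (hx : 0 < x) : S.h x < x := by
  have := S.h_strictConcave.neg.lt_slope_of_hasDerivWithinAt Set.self_mem_Ici
    (Set.mem_Ici.2 hx.le) hx (S.h_hasDeriv 0 Set.self_mem_Ici).neg
  rw [S.h'_zero, slope_def_field] at this
  simp only [Pi.neg_apply, S.h_zero, neg_zero, sub_zero] at this
  rw [neg_div, neg_lt_neg_iff, div_lt_one hx] at this
  exact this

lemma Hfn_neg {x : ℝ} (hx : 0 < x) : S.Hfn x < 0 :=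
  Real.log_neg (div_pos (S.h_pos hx) hx) ((div_lt_one hx).2 (S.h_lt_self hx))

lemma Hfn_le_Hfn {x y : ℝ} (hx : 0 < x) (hxy : x ≤ y) : S.Hfn y ≤ S.Hfn x := by
  rcases hxy.eq_or_lt with rfl | hxy
  · rfl
  have hy : 0 < y := hx.trans hxy
  have := S.h_strictConcave.secant_strict_mono Set.self_mem_Ici (Set.mem_Ici.2 hx.le)
    (Set.mem_Ici.2 hy.le) hx.ne' hy.ne' hxy
  simp only [S.h_zero, sub_zero] at this
  exact Real.log_le_log (div_pos (S.h_pos hy) hy) this.le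

lemma abs_Hfn_le {x M : ℝ} (hx : 0 < x) (hxM : x ≤ M) : |S.Hfn x| ≤ |S.Hfn M| :=
  abs_le_abs_of_nonpos (S.Hfn_neg hx).le (S.Hfn_le_Hfn hx hxM)

lemma f_zero (t : ℝ) (θ : Θ) : S.f t θ 0 = 0 := by
  simp [f, S.h_zero]

lemma f_pos (t : ℝ) (θ : Θ) {x : ℝ} (hx : 0 < x) : 0 < S.f t θ x :=
  mul_pos (mul_pos (Real.exp_pos _) (S.g_pos θ)) (S.h_pos hx)

lemma f_monotoneOn (t : ℝ) (θ : Θ) : MonotoneOn (S.f t θ) (Set.Ici 0) := fun _ hx _ hy hxy =>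
  mul_le_mul_of_nonneg_left (S.h_strictMonoOn.monotoneOn hx hy hxy)
    (mul_pos (Real.exp_pos _) (S.g_pos θ)).le

lemma f_nonneg (t : ℝ) (θ : Θ) {x : ℝ} (hx : 0 ≤ x) : 0 ≤ S.f t θ x := by
  simpa [S.f_zero] using S.f_monotoneOn t θ Set.self_mem_Ici (Set.mem_Ici.2 hx) hx

lemma f_continuousOn (t : ℝ) (θ : Θ) : ContinuousOn (S.f t θ) (Set.Ici 0) :=
  continuousOn_const.mul S.h_continuousOn

lemma measurable_h_comp {u : Θ → ℝ} (hu : Measurable u) (hu0 : ∀ θ, 0 ≤ u θ) :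
    Measurable fun θ => S.h (u θ) := by
  have h_max : Continuous fun x => S.h (max x 0) :=
    S.h_continuousOn.comp_continuous (continuous_id.max continuous_const) fun x => le_max_right x 0
  convert h_max.measurable.comp hu using 2 with θ
  simp [hu0 θ]

lemma measurable_f_comp (t : ℝ) {a : Θ → Θ} {u : Θ → ℝ} (ha : Measurable a) (hu : Measurable u)
    (hu0 : ∀ θ, 0 ≤ u θ) : Measurable fun θ => S.f t (a θ) (u θ) :=
  (measurable_const.mul (S.g_meas.comp ha)).mul (S.measurable_h_comp hu hu0)

lemma log_f {t : ℝ} (θ : Θ) {x : ℝ} (hx : 0 < x) :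
    Real.log (S.f t θ x) = Real.log x + (Real.log (S.g θ) - t + S.Hfn x) := by
  have hq : S.f t θ x = x * (Real.exp (-t) * S.g θ * (S.h x / x)) := by
    rw [f]; field_simp
  rw [hq, Real.log_mul hx.ne' (by have := S.g_pos θ; have := S.h_pos hx; positivity),
    Real.log_mul (by have := S.g_pos θ; positivity) (div_pos (S.h_pos hx) hx).ne',
    Real.log_mul (Real.exp_pos _).ne' (S.g_pos θ).ne', Real.log_exp, Hfn]
  ring

section ψ

variable {t M : ℝ}

lemma ψ_succ (n : ℕ) (θ : Θ) : S.ψ t M (n + 1) θ = S.f t (S.Tinv θ) (S.ψ t M n (S.Tinv θ)) := by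
  simp only [ψ, fn, Function.iterate_succ_apply, (S.right_inv.iterate n) (S.Tinv θ)]

lemma ψ_succ_apply_T (n : ℕ) (θ : Θ) : S.ψ t M (n + 1) (S.T θ) = S.f t θ (S.ψ t M n θ) := by
  rw [ψ_succ, S.left_inv θ]

lemma ψ_nonneg (hM : 0 ≤ M) (n : ℕ) (θ : Θ) : 0 ≤ S.ψ t M n θ := by
  induction n generalizing θ with
  | zero => exact hM
  | succ n ih => rw [ψ_succ]; exact S.f_nonneg t _ (ih _)

lemma measurable_ψ (hM : 0 ≤ M) (n : ℕ) : Measurable (S.ψ t M n) := by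
  induction n with
  | zero => exact measurable_const
  | succ n ih =>
    simp only [funext (S.ψ_succ n)]
    exact S.measurable_f_comp t S.Tinv_meas (ih.comp S.Tinv_meas) fun θ => S.ψ_nonneg hM n _

lemma antitone_ψ (hM : 0 ≤ M) (hMf : ∀ θ, S.f t θ M ≤ M) (θ : Θ) :
    Antitone fun n => S.ψ t M n θ := by
  refine antitone_nat_of_succ_le fun n => ?_
  induction n generalizing θ with
  | zero => exact hMf _
  | succ n ih =>
    rw [S.ψ_succ (n + 1) θ, S.ψ_succ n θ]
    exact S.f_monotoneOn t _ (S.ψ_nonneg hM _ _) (S.ψ_nonneg hM _ _) (ih _)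

end ψ

section φ

variable {t M : ℝ}

lemma φ_nonneg (hM : 0 ≤ M) (θ : Θ) : 0 ≤ S.φ t M θ :=
  le_ciInf fun n => S.ψ_nonneg hM (n + 1) θ

lemma measurable_φ (hM : 0 ≤ M) : Measurable (S.φ t M) :=
  Measurable.iInf fun n => S.measurable_ψ hM (n + 1)

lemma φ_le (hM : 0 ≤ M) (hMf : ∀ θ, S.f t θ M ≤ M) (θ : Θ) : S.φ t M θ ≤ M :=
  (ciInf_le ⟨0, Set.forall_mem_range.2 fun n => S.ψ_nonneg hM (n + 1) θ⟩ 0).trans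
    (S.antitone_ψ hM hMf θ (Nat.zero_le 1))

lemma tendsto_ψ (hM : 0 ≤ M) (hMf : ∀ θ, S.f t θ M ≤ M) (θ : Θ) :
    Tendsto (fun n => S.ψ t M n θ) atTop (𝓝 (S.φ t M θ)) :=
  (tendsto_add_atTop_iff_nat 1).1 <| tendsto_atTop_ciInf
    (fun _ _ hmn => S.antitone_ψ hM hMf θ (Nat.succ_le_succ hmn))
    ⟨0, Set.forall_mem_range.2 fun n => S.ψ_nonneg hM (n + 1) θ⟩

lemma φ_apply_T (hM : 0 ≤ M) (hMf : ∀ θ, S.f t θ M ≤ M) (θ : Θ) :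
    S.φ t M (S.T θ) = S.f t θ (S.φ t M θ) := by
  have hlim := ((S.f_continuousOn t θ).continuousWithinAt (S.φ_nonneg hM θ)).tendsto.comp
    (tendsto_nhdsWithin_iff.2 ⟨S.tendsto_ψ hM hMf θ, Eventually.of_forall (S.ψ_nonneg hM · θ)⟩)
  refine tendsto_nhds_unique ((tendsto_add_atTop_iff_nat 1).2 (S.tendsto_ψ hM hMf (S.T θ))) ?_
  simpa only [Function.comp_def, ψ_succ_apply_T] using hlim

lemma preimage_T_setOf_φ_pos (hM : 0 ≤ M) (hMf : ∀ θ, S.f t θ M ≤ M) :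
    S.T ⁻¹' {θ | 0 < S.φ t M θ} = {θ | 0 < S.φ t M θ} := by
  ext θ
  simp only [Set.mem_preimage, Set.mem_ofPred_eq, S.φ_apply_T hM hMf]
  refine ⟨fun h => (S.φ_nonneg hM θ).lt_of_ne fun h0 => ?_, S.f_pos t θ⟩
  rw [← h0, f_zero] at h
  exact h.false

lemma lt_γfn_of_ae_φ_pos (hM : 0 ≤ M) (hMf : ∀ θ, S.f t θ M ≤ M) {C : ℝ}
    (hC : ∀ θ, |Real.log (S.g θ)| ≤ C) (ν : Measure Θ) [IsProbabilityMeasure ν]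
    (hν : MeasurePreserving S.T ν ν) (hpos : ∀ᵐ θ ∂ν, 0 < S.φ t M θ) :
    t < S.γfn ν := by
  set H : Θ → ℝ := fun θ => S.Hfn (S.φ t M θ)
  have hφ_meas := S.measurable_φ hM (t := t)
  have hlog_g : Integrable (fun θ => Real.log (S.g θ)) ν :=
    (integrable_const C).mono' (Real.measurable_log.comp S.g_meas).aestronglyMeasurable
      (ae_of_all _ hC)
  have hH : Integrable H ν :=
    (integrable_const |S.Hfn M|).mono'
      (Real.measurable_log.comp ((S.measurable_h_comp hφ_meas (S.φ_nonneg hM)).div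
        hφ_meas)).aestronglyMeasurable
      (hpos.mono fun θ hθ => S.abs_Hfn_le hθ (S.φ_le hM hMf θ))
  have hcob : 0 ≤ ∫ θ, (Real.log (S.g θ) - t + H θ) ∂ν :=
    hν.integral_nonneg_of_le_add_comp (Real.measurable_log.comp hφ_meas)
      ((hlog_g.sub (integrable_const t)).add hH)
      (hpos.mono fun θ hθ => by
        rw [Function.comp_apply, Function.comp_apply, S.φ_apply_T hM hMf, S.log_f θ hθ])
  have hH_neg : ∫ θ, H θ ∂ν < 0 := integral_neg_of_ae_neg hH (hpos.mono fun θ hθ => S.Hfn_neg hθ)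
  have hsplit : ∫ θ, (Real.log (S.g θ) - t + H θ) ∂ν = S.γfn ν - t + ∫ θ, H θ ∂ν := by
    rw [integral_add (f := fun θ => Real.log (S.g θ) - t) (hlog_g.sub (integrable_const t)) hH,
      integral_sub hlog_g (integrable_const t)]
    simp [γfn]
  linarith

end φ

lemma γfn_le_of_abs_log_g_le {C : ℝ} (hC : ∀ θ, |Real.log (S.g θ)| ≤ C) (ν : Measure Θ)
    [IsProbabilityMeasure ν] : S.γfn ν ≤ C :=
  (le_abs_self _).trans <| by
    simpa [γfn] using norm_integral_le_of_norm_le_const (μ := ν)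
      (f := fun θ => Real.log (S.g θ)) (ae_of_all ν fun θ => by simpa using hC θ)

lemma γfn_le_γmax {C : ℝ} (hC : ∀ θ, |Real.log (S.g θ)| ≤ C) (ν : Measure Θ)
    [IsProbabilityMeasure ν] (hν : MeasurePreserving S.T ν ν) : S.γfn ν ≤ S.γmax :=
  le_csSup ⟨C, by rintro _ ⟨ν, _, -, rfl⟩; exact S.γfn_le_of_abs_log_g_le hC ν⟩
    ⟨ν, inferInstance, hν, rfl⟩

end Setting

theorem stmt18_general {Θ : Type*} [TopologicalSpace Θ] [CompactSpace Θ] [MeasurableSpace Θ]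
    (S : Setting Θ) (hgc : Continuous S.g)
    (M : ℝ → ℝ) (hM : ∀ t, 0 < M t) (hMf : ∀ t θ, S.f t θ (M t) < M t)
    (μ : Measure Θ) [IsProbabilityMeasure μ] (hμ : MeasurePreserving S.T μ μ) :
    μ (S.Nset S.γmax (M S.γmax)) = 1 := by
  set t := S.γmax
  have hM0 := (hM t).le
  have hMf' : ∀ θ, S.f t θ (M t) ≤ M t := fun θ => (hMf t θ).le
  set A := {θ | 0 < S.φ t (M t) θ}
  have hA : MeasurableSet A := measurableSet_lt measurable_const (S.measurable_φ hM0)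
  have hN : S.Nset t (M t) = Aᶜ := by
    ext θ
    simp only [Setting.Nset, A, Set.mem_ofPred_eq, Set.mem_compl_iff, not_lt]
    exact ⟨le_of_eq, fun h => h.antisymm (S.φ_nonneg hM0 θ)⟩
  rw [hN, prob_compl_eq_one_iff hA]
  by_contra hμA
  obtain ⟨C, hC⟩ := isCompact_univ.exists_bound_of_continuousOn
    (hgc.log fun θ => (S.g_pos θ).ne').continuousOn
  replace hC : ∀ θ, |Real.log (S.g θ)| ≤ C := fun θ => hC θ (Set.mem_univ θ)
  have := ProbabilityTheory.cond_isProbabilityMeasure (μ := μ) hμA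
  have hν := hμ.cond hA (S.preimage_T_setOf_φ_pos hM0 hMf')
  exact (S.γfn_le_γmax hC _ hν).not_gt
    (S.lt_γfn_of_ae_φ_pos hM0 hMf' hC _ hν (ProbabilityTheory.ae_cond_mem hA))

/-- in the topological setting, assuming additionally `h''(0) < 0`,
`μ(N_{γ_max}) = 1` for every `T`-invariant Borel probability measure `μ`. -/
theorem stmt18 {Θ : Type*} [TopologicalSpace Θ] [CompactSpace Θ] [Nonempty Θ]
    [TopologicalSpace.MetrizableSpace Θ] [MeasurableSpace Θ] [BorelSpace Θ]
    (S : Setting Θ) (hT : Continuous S.T) (hTinv : Continuous S.Tinv)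
    (hgc : Continuous S.g)
    (hsecond : ∃ c : ℝ, c < 0 ∧ HasDerivWithinAt S.h' c (Set.Ici 0) 0)
    (M : ℝ → ℝ) (hM : ∀ t, 0 < M t) (hMf : ∀ t θ, S.f t θ (M t) < M t)
    (μ : Measure Θ) [IsProbabilityMeasure μ] (hμ : MeasurePreserving S.T μ μ) :
    μ (S.Nset S.γmax (M S.γmax)) = 1 :=
  stmt18_general S hgc M hM hMf μ hμ
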